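/- arXiv:1604.07995 — 7 statements merged into one kernel-verified Lean document; each statement's English description precedes it below -/
import Mathlib

section
/- The map φ(U,V,W) = (W + (W+1)U/V, W·V/U + W + 1, U(V-1)/(U+V)) is an involution on its domain, i.e. φ∘φ is the identity. -/
/-- The stationarity-reversibility map of the Inverse-Beta polymer:
`φ (U, V, W) = (W + (W+1)·U/V, W·V/U + W + 1, U·(V-1)/(U+V))`. -/
noncomputable def phiIB (p : ℝ × ℝ × ℝ) : ℝ × ℝ × ℝ :=
  (p.2.2 + (p.2.2 + 1) * p.1 / p.2.1,
   p.2.2 * p.2.1 / p.1 + p.2.2 + 1,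
   p.1 * (p.2.1 - 1) / (p.1 + p.2.1))

/-- φ is an involution on its domain: for `U > 0`, `V > 1`, `W > 0`, `φ (φ (U,V,W)) = (U,V,W)`. -/
theorem phiIB_involution (U V W : ℝ) (hU : 0 < U) (hV : 1 < V) (hW : 0 < W) :
    phiIB (phiIB (U, V, W)) = (U, V, W) := by
  have hU0 : U ≠ 0 := hU.ne'
  have hV0 : (0:ℝ) < V := lt_trans one_pos hV
  have hVne : V ≠ 0 := hV0.ne'
  have hUV : U + V ≠ 0 := by positivity
  have h1 : W + (W + 1) * U / V ≠ 0 := by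
    have : 0 < W + (W+1) * U / V := by positivity
    exact this.ne'
  have h2 : W * V / U + W + 1 ≠ 0 := by
    have : 0 < W * V / U + W + 1 := by positivity
    exact this.ne'
  have h12 : (W + (W + 1) * U / V) + (W * V / U + W + 1) ≠ 0 := by
    have : 0 < (W + (W + 1) * U / V) + (W * V / U + W + 1) := by positivity
    exact this.ne'
  simp only [phiIB]
  refine Prod.ext ?_ (Prod.ext ?_ ?_) <;> simp only <;> field_simp <;> ring
end

section
/- The Jacobian determinant of the map φ(U,V,W) = (W + (W+1)U/V, W·V/U + W + 1, U(V-1)/(U+V)) equals -(UW + U + VW)/(UV). -/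
open Matrix

def phiIBJacobianMatrix {K : Type*} [Field K] (U V W : K) : Matrix (Fin 3) (Fin 3) K :=
  !![(W + 1) / V, -((W + 1) * U / V ^ 2), 1 + U / V;
     -(W * V / U ^ 2), W / U, V / U + 1;
     (V - 1) * V / (U + V) ^ 2, U * (U + 1) / (U + V) ^ 2, 0]

theorem det_phiIBJacobianMatrix {K : Type*} [Field K] {U V : K} (W : K) (hU : U ≠ 0)
    (hV : V ≠ 0) (hUV : U + V ≠ 0) :
    (phiIBJacobianMatrix U V W).det = -((U * W + U + V * W) / (U * V)) := by
  rw [phiIBJacobianMatrix, det_fin_three]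
  simp only [of_apply, cons_val', cons_val_zero, cons_val_one, cons_val, cons_val_fin_one]
  field_simp
  ring

theorem phiIB_partials_eq_jacobianMatrix {𝕜 : Type*} [NontriviallyNormedField 𝕜] {U V : 𝕜}
    (W : 𝕜) (hUV : U + V ≠ 0) :
    !![deriv (fun x => W + (W + 1) * x / V) U,
       deriv (fun y => W + (W + 1) * U / y) V,
       deriv (fun z => z + (z + 1) * U / V) W;
       deriv (fun x => W * V / x + W + 1) U,
       deriv (fun y => W * y / U + W + 1) V,
       deriv (fun z => z * V / U + z + 1) W;
       deriv (fun x => x * (V - 1) / (x + V)) U,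
       deriv (fun y => U * (y - 1) / (U + y)) V,
       deriv (fun _ => U * (V - 1) / (U + V)) W] = phiIBJacobianMatrix U V W := by
  rw [phiIBJacobianMatrix]
  simp only [EmbeddingLike.apply_eq_iff_eq, vecCons_inj, and_true]
  refine ⟨⟨?_, ?_, ?_⟩, ⟨?_, ?_, ?_⟩, ⟨?_, ?_, ?_⟩⟩
  · simp
  · simp only [deriv_const_add', deriv_const_div_id]; ring
  · rw [deriv_fun_add (by fun_prop) (by fun_prop)]; simp
  · simp only [deriv_add_const', deriv_const_div_id]; ring
  · simp
  · rw [deriv_add_const, deriv_fun_add (by fun_prop) (by fun_prop)]; simp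
  · exact (((hasDerivAt_id' U).mul_const (V - 1)).div ((hasDerivAt_id' U).add_const V)
      hUV).deriv.trans (by ring)
  · exact ((((hasDerivAt_id' V).sub_const 1).const_mul U).div ((hasDerivAt_id' V).const_add U)
      hUV).deriv.trans (by ring)
  · simp

theorem phiIB_jacobian_general (U V W : ℝ) (hU : 0 < U) (hV : 1 < V) :
    Matrix.det
      !![deriv (fun x => W + (W + 1) * x / V) U,
         deriv (fun y => W + (W + 1) * U / y) V,
         deriv (fun z => z + (z + 1) * U / V) W;
         deriv (fun x => W * V / x + W + 1) U,
         deriv (fun y => W * y / U + W + 1) V,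
         deriv (fun z => z * V / U + z + 1) W;
         deriv (fun x => x * (V - 1) / (x + V)) U,
         deriv (fun y => U * (y - 1) / (U + y)) V,
         deriv (fun z => U * (V - 1) / (U + V)) W]
      = -((U * W + U + V * W) / (U * V)) := by
  have hV₀ : 0 < V := by linarith
  have hUV : U + V ≠ 0 := (add_pos hU hV₀).ne'
  rw [phiIB_partials_eq_jacobianMatrix W hUV, det_phiIBJacobianMatrix W hU.ne' hV₀.ne' hUV]

/-- The Jacobian determinant of the Inverse-Beta stationarity-reversibility map
`φ(U,V,W) = (W + (W+1)U/V, W·V/U + W + 1, U(V-1)/(U+V))`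
equals `-(UW + U + VW)/(UV)` for `U > 0`, `V > 1`, `W > 0`. -/
theorem phiIB_jacobian (U V W : ℝ) (hU : 0 < U) (hV : 1 < V) (hW : 0 < W) :
    Matrix.det
      !![deriv (fun x => W + (W + 1) * x / V) U,
         deriv (fun y => W + (W + 1) * U / y) V,
         deriv (fun z => z + (z + 1) * U / V) W;
         deriv (fun x => W * V / x + W + 1) U,
         deriv (fun y => W * y / U + W + 1) V,
         deriv (fun z => z * V / U + z + 1) W;
         deriv (fun x => x * (V - 1) / (x + V)) U,
         deriv (fun y => U * (y - 1) / (U + y)) V,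
         deriv (fun z => U * (V - 1) / (U + V)) W]
      = -((U * W + U + V * W) / (U * V)) :=
  phiIB_jacobian_general U V W hU hV
end

section
/- Let U, V, W be independent with U ∼ 1/Beta(γ-λ, β+λ) - 1, V ∼ 1/Beta(λ, β), W ∼ 1/Beta(γ,β) - 1, and let (U',V') be the first two components of φ(U,V,W). Then the joint density of ((U',V'),(U,V)) is symmetric under exchanging (U,V) ↔ (U',V') (detailed balance). -/
/-!
On the domain `(0,∞) × (1,∞) × (0,∞)` the map `φ` is an involution, and the product density `ρ`
of `(U, V, W)` satisfies `|det Dφ x| * ρ (φ x) = ρ x`: once the coordinates of `φ x`, shifted by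
`±1`, are factored, both sides are products of real powers of `u, v, w, u + 1, v - 1, w + 1,
u + v, u w + u + v w`, and their logarithms agree. By the change of variables formula `φ`
preserves the law `μ` of `(U, V, W)`; as `φ ∘ φ = id` `μ`-a.e., for any measurable `f` the pairs
`(f ∘ φ, f)` and `(f, f ∘ φ)` have the same law under `μ`. Take `f` the projection to `(U, V)`.
-/

open MeasureTheory ProbabilityTheory Real

noncomputable def invBetaShiftDensity (a b : ℝ) (w : ℝ) : ℝ :=
  if 0 < w then
    Gamma (a + b) / (Gamma a * Gamma b) * (1 - 1 / (w + 1)) ^ (b - 1) * (1 / (w + 1)) ^ (a + 1)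
  else 0

noncomputable def invBetaDensity (a b : ℝ) (v : ℝ) : ℝ :=
  if 1 < v then
    Gamma (a + b) / (Gamma a * Gamma b) * (1 - 1 / v) ^ (b - 1) * (1 / v) ^ (a + 1)
  else 0

noncomputable def phi1 (U V W : ℝ) : ℝ := W + (W + 1) * U / V

noncomputable def phi2 (U V W : ℝ) : ℝ := W * V / U + W + 1

open Set
open scoped ENNReal

theorem HasFDerivAt.div {𝕜 E : Type*} [NontriviallyNormedField 𝕜] [NormedAddCommGroup E]
    [NormedSpace 𝕜 E] {c d : E → 𝕜} {c' d' : E →L[𝕜] 𝕜} {x : E} (hc : HasFDerivAt c c' x)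
    (hd : HasFDerivAt d d' x) (hx : d x ≠ 0) :
    HasFDerivAt (fun y => c y / d y) ((d x)⁻¹ • c' - (c x / d x ^ 2) • d') x := by
  simp only [div_eq_mul_inv]
  refine (hc.mul ((hasFDerivAt_inv hx).comp x hd)).congr_fderiv ?_
  ext y
  simp only [Function.comp_apply, add_apply, smul_apply, sub_apply, smul_eq_mul,
    ContinuousLinearMap.comp_apply, ContinuousLinearMap.toSpanSingleton_apply]
  ring

@[simps]
def finThreeArrowEquiv : (Fin 3 → ℝ) ≃ₗ[ℝ] ℝ × ℝ × ℝ where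
  toFun f := (f 0, f 1, f 2)
  invFun x := ![x.1, x.2.1, x.2.2]
  map_add' _ _ := rfl
  map_smul' _ _ := rfl
  left_inv f := by ext i; fin_cases i <;> rfl
  right_inv _ := rfl

noncomputable def Matrix.toTripleCLM (M : Matrix (Fin 3) (Fin 3) ℝ) :
    (ℝ × ℝ × ℝ) →L[ℝ] ℝ × ℝ × ℝ :=
  LinearMap.toContinuousLinearMap
    (finThreeArrowEquiv.toLinearMap ∘ₗ M.toLin' ∘ₗ finThreeArrowEquiv.symm.toLinearMap)

theorem Matrix.det_toTripleCLM (M : Matrix (Fin 3) (Fin 3) ℝ) : M.toTripleCLM.det = M.det := by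
  rw [ContinuousLinearMap.det, Matrix.toTripleCLM, LinearMap.coe_toContinuousLinearMap,
    LinearMap.det_conj, LinearMap.det_toLin']

theorem Matrix.toTripleCLM_apply (M : Matrix (Fin 3) (Fin 3) ℝ) (x : ℝ × ℝ × ℝ) :
    M.toTripleCLM x = (M 0 0 * x.1 + M 0 1 * x.2.1 + M 0 2 * x.2.2,
      M 1 0 * x.1 + M 1 1 * x.2.1 + M 1 2 * x.2.2,
      M 2 0 * x.1 + M 2 1 * x.2.1 + M 2 2 * x.2.2) := by
  simp [Matrix.toTripleCLM, Matrix.mulVec, dotProduct, Fin.sum_univ_three]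

section ChangeOfVariables

variable {E : Type*} [NormedAddCommGroup E] [NormedSpace ℝ E] [FiniteDimensional ℝ E]
  [MeasurableSpace E] [BorelSpace E] (μ : Measure E) [μ.IsAddHaarMeasure]

theorem measurePreserving_withDensity_of_leftInvOn {s : Set E} {ψ : E → E}
    {ψ' : E → E →L[ℝ] E} {ρ : E → ℝ≥0∞} (hs : MeasurableSet s) (hψ : Measurable ψ)
    (hmaps : MapsTo ψ s s) (hinv : LeftInvOn ψ ψ s)
    (hψ' : ∀ x ∈ s, HasFDerivWithinAt ψ (ψ' x) s x) (hρ : Function.support ρ ⊆ s)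
    (hjac : ∀ x ∈ s, ENNReal.ofReal |(ψ' x).det| * ρ (ψ x) = ρ x) :
    MeasurePreserving ψ (μ.withDensity ρ) (μ.withDensity ρ) := by
  have hbij : BijOn ψ s s := InvOn.bijOn ⟨hinv, hinv⟩ hmaps hmaps
  have hrestrict : μ.withDensity ρ = (μ.restrict s).withDensity ρ := by
    rw [← withDensity_indicator hs, indicator_eq_self.2 hρ]
  have happly (B : Set E) (hB : MeasurableSet B) :
      (μ.restrict s).withDensity ρ B = ∫⁻ x in s, B.indicator ρ x ∂μ := by
    rw [withDensity_apply _ hB, lintegral_indicator hB]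
  refine ⟨hψ, Measure.ext fun A hA => ?_⟩
  rw [Measure.map_apply hψ hA, hrestrict, happly _ (hψ hA), happly _ hA]
  conv_rhs =>
    rw [← hbij.image_eq, lintegral_image_eq_lintegral_abs_det_fderiv_mul μ hs hψ' hbij.injOn]
  refine setLIntegral_congr_fun hs fun x hx => ?_
  by_cases h : ψ x ∈ A
  · rw [indicator_of_mem h, indicator_of_mem (mem_preimage.2 h), hjac x hx]
  · rw [indicator_of_notMem h, indicator_of_notMem (mt mem_preimage.1 h), mul_zero]

end ChangeOfVariables

theorem MeasureTheory.MeasurePreserving.map_prodMk_swap_of_ae_involutive {α β : Type*}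
    [MeasurableSpace α] [MeasurableSpace β] {μ : Measure α} {ψ : α → α} {f : α → β}
    (hψ : MeasurePreserving ψ μ μ) (hinv : ∀ᵐ x ∂μ, ψ (ψ x) = x) (hf : Measurable f) :
    μ.map (fun x => (f (ψ x), f x)) = μ.map (fun x => (f x, f (ψ x))) :=
  calc μ.map (fun x => (f (ψ x), f x))
      = (μ.map ψ).map (fun x => (f (ψ x), f x)) := by rw [hψ.map_eq]
    _ = μ.map (fun x => (f (ψ (ψ x)), f (ψ x))) :=
      Measure.map_map ((hf.comp hψ.measurable).prodMk hf) hψ.measurable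
    _ = μ.map (fun x => (f x, f (ψ x))) :=
      Measure.map_congr (by filter_upwards [hinv] with x hx; rw [hx])

theorem map_prodMk_eq_prod_of_iIndepFun {Ω β : Type*} [MeasurableSpace Ω] [MeasurableSpace β]
    {P : Measure Ω} [IsFiniteMeasure P] {X Y Z : Ω → β} (hX : Measurable X)
    (hY : Measurable Y) (hZ : Measurable Z) (h : iIndepFun ![X, Y, Z] P) :
    P.map (fun ω => (X ω, Y ω, Z ω)) = (P.map X).prod ((P.map Y).prod (P.map Z)) := by
  have hmeas (i : Fin 3) : Measurable (![X, Y, Z] i) := by fin_cases i <;> assumption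
  have hYZ : IndepFun Y Z P := by simpa using h.indepFun (i := 1) (j := 2) (by decide)
  have hXYZ : IndepFun X (fun ω => (Y ω, Z ω)) P := by
    simpa using (h.indepFun_prodMk hmeas 1 2 0 (by decide) (by decide)).symm
  rw [(indepFun_iff_map_prod_eq_prod_map_map hX.aemeasurable
      (hY.prodMk hZ).aemeasurable).1 hXYZ,
    (indepFun_iff_map_prod_eq_prod_map_map hY.aemeasurable hZ.aemeasurable).1 hYZ]

section Densities

variable {a b : ℝ}

theorem invBetaShiftDensity_of_pos {w : ℝ} (hw : 0 < w) :
    invBetaShiftDensity a b w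
      = Gamma (a + b) / (Gamma a * Gamma b) * (w ^ (b - 1) / (w + 1) ^ (a + b)) := by
  have hw1 : 0 < w + 1 := by linarith
  have h : 1 - 1 / (w + 1) = w / (w + 1) := by field_simp; ring
  have hpow : (w + 1) ^ (a + b) = (w + 1) ^ (b - 1) * (w + 1) ^ (a + 1) := by
    rw [← rpow_add hw1]; ring_nf
  rw [invBetaShiftDensity, if_pos hw, h, div_rpow hw.le hw1.le, one_div, inv_rpow hw1.le, hpow]
  field_simp

theorem invBetaDensity_of_one_lt {v : ℝ} (hv : 1 < v) :
    invBetaDensity a b v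
      = Gamma (a + b) / (Gamma a * Gamma b) * ((v - 1) ^ (b - 1) / v ^ (a + b)) := by
  have hv0 : 0 < v := by linarith
  have hv1 : 0 < v - 1 := by linarith
  have h : 1 - 1 / v = (v - 1) / v := by field_simp
  have hpow : v ^ (a + b) = v ^ (b - 1) * v ^ (a + 1) := by
    rw [← rpow_add hv0]; ring_nf
  rw [invBetaDensity, if_pos hv, h, div_rpow hv1.le hv0.le, one_div, inv_rpow hv0.le, hpow]
  field_simp

theorem invBetaShiftDensity_nonneg (ha : 0 < a) (hb : 0 < b) (w : ℝ) :
    0 ≤ invBetaShiftDensity a b w := by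
  by_cases hw : 0 < w
  · have := Gamma_pos_of_pos ha
    have := Gamma_pos_of_pos hb
    have := Gamma_pos_of_pos (add_pos ha hb)
    rw [invBetaShiftDensity_of_pos hw]
    positivity
  · rw [invBetaShiftDensity, if_neg hw]

theorem invBetaDensity_nonneg (ha : 0 < a) (hb : 0 < b) (v : ℝ) : 0 ≤ invBetaDensity a b v := by
  by_cases hv : 1 < v
  · have := Gamma_pos_of_pos ha
    have := Gamma_pos_of_pos hb
    have := Gamma_pos_of_pos (add_pos ha hb)
    have hv1 : 0 < v - 1 := by linarith
    rw [invBetaDensity_of_one_lt hv]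
    positivity
  · rw [invBetaDensity, if_neg hv]

@[fun_prop]
theorem measurable_invBetaShiftDensity : Measurable (invBetaShiftDensity a b) :=
  Measurable.ite measurableSet_Ioi (by fun_prop) measurable_const

@[fun_prop]
theorem measurable_invBetaDensity : Measurable (invBetaDensity a b) :=
  Measurable.ite measurableSet_Ioi (by fun_prop) measurable_const

end Densities

def phiDomain : Set (ℝ × ℝ × ℝ) := Ioi 0 ×ˢ Ioi 1 ×ˢ Ioi 0

noncomputable def phi (x : ℝ × ℝ × ℝ) : ℝ × ℝ × ℝ :=
  (phi1 x.1 x.2.1 x.2.2, phi2 x.1 x.2.1 x.2.2, x.1 * (x.2.1 - 1) / (x.1 + x.2.1))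

theorem mem_phiDomain {x : ℝ × ℝ × ℝ} : x ∈ phiDomain ↔ 0 < x.1 ∧ 1 < x.2.1 ∧ 0 < x.2.2 := by
  simp [phiDomain]

theorem measurableSet_phiDomain : MeasurableSet phiDomain :=
  measurableSet_Ioi.prod (measurableSet_Ioi.prod measurableSet_Ioi)

@[fun_prop]
theorem measurable_phi : Measurable phi := by
  unfold phi phi1 phi2
  fun_prop

section PhiFactorization

variable {u v w : ℝ}

theorem phi1_eq (hv : v ≠ 0) : phi1 u v w = (u * w + u + v * w) / v := by
  unfold phi1; field_simp; ring

theorem phi1_add_one (hv : v ≠ 0) : phi1 u v w + 1 = (u + v) * (w + 1) / v := by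
  unfold phi1; field_simp; ring

theorem phi2_eq (hu : u ≠ 0) : phi2 u v w = (u * w + u + v * w) / u := by
  unfold phi2; field_simp; ring

theorem phi2_sub_one (hu : u ≠ 0) : phi2 u v w - 1 = w * (u + v) / u := by
  unfold phi2; field_simp; ring

end PhiFactorization

theorem mapsTo_phi : MapsTo phi phiDomain phiDomain := by
  rintro ⟨u, v, w⟩ hx
  obtain ⟨hu, hv, hw⟩ := mem_phiDomain.1 hx
  have hv1 : 0 < v - 1 := by linarith
  have hphi2 : 0 < phi2 u v w - 1 := by rw [phi2_sub_one hu.ne']; positivity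
  refine mem_phiDomain.2 ⟨?_, by simp only [phi]; linarith, by simp only [phi]; positivity⟩
  rw [phi, phi1_eq (by positivity)]
  positivity

theorem leftInvOn_phi : LeftInvOn phi phi phiDomain := by
  rintro ⟨u, v, w⟩ hx
  obtain ⟨hu, hv, hw⟩ := mem_phiDomain.1 hx
  have hv0 : 0 < v := by linarith
  simp only [phi, phi1, phi2]
  refine Prod.ext ?_ (Prod.ext ?_ ?_) <;> simp only <;> field_simp <;> ring

noncomputable def phiJacobian (x : ℝ × ℝ × ℝ) : Matrix (Fin 3) (Fin 3) ℝ :=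
  let u := x.1; let v := x.2.1; let w := x.2.2
  !![(w + 1) / v, -((w + 1) * u / v ^ 2), 1 + u / v;
     -(w * v / u ^ 2), w / u, v / u + 1;
     v * (v - 1) / (u + v) ^ 2, u * (u + 1) / (u + v) ^ 2, 0]

theorem hasFDerivAt_phi {x : ℝ × ℝ × ℝ} (hu : 0 < x.1) (hv : 0 < x.2.1) :
    HasFDerivAt phi (phiJacobian x).toTripleCLM x := by
  have hU := hasFDerivAt_fst (𝕜 := ℝ) (p := x)
  have hV := (hasFDerivAt_snd (𝕜 := ℝ) (p := x)).fst
  have hW := (hasFDerivAt_snd (𝕜 := ℝ) (p := x)).snd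
  have h1 := hW.add (((hW.add_const 1).mul hU).div hV hv.ne')
  have h2 := (((hW.mul hV).div hU hu.ne').add hW).add_const 1
  have h3 := (hU.mul (hV.sub_const 1)).div (hU.add hV) (show x.1 + x.2.1 ≠ 0 by positivity)
  refine (h1.prodMk (h2.prodMk h3)).congr_fderiv (ContinuousLinearMap.ext fun y => ?_)
  rw [Matrix.toTripleCLM_apply]
  simp only [ContinuousLinearMap.prod_apply, ContinuousLinearMap.comp_apply, Pi.mul_apply,
    Pi.add_apply, add_apply, sub_apply, smul_apply, smul_eq_mul, ContinuousLinearMap.coe_fst',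
    ContinuousLinearMap.coe_snd', phiJacobian, Matrix.of_apply, Matrix.cons_val',
    Matrix.cons_val_zero, Matrix.cons_val_one, Matrix.cons_val, Matrix.cons_val_fin_one,
    Prod.mk.injEq]
  refine ⟨?_, ?_, ?_⟩ <;> field_simp <;> ring

theorem det_phiJacobian {x : ℝ × ℝ × ℝ} (hu : 0 < x.1) (hv : 0 < x.2.1) :
    (phiJacobian x).det = -((x.1 * x.2.2 + x.1 + x.2.1 * x.2.2) / (x.1 * x.2.1)) := by
  have huv : 0 < x.1 + x.2.1 := by positivity
  rw [Matrix.det_fin_three]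
  simp only [phiJacobian, Matrix.of_apply, Matrix.cons_val', Matrix.cons_val_zero,
    Matrix.cons_val_one, Matrix.cons_val, Matrix.cons_val_fin_one]
  field_simp
  ring

noncomputable def stationaryDensity (γ β lam : ℝ) (x : ℝ × ℝ × ℝ) : ℝ≥0∞ :=
  ENNReal.ofReal (invBetaShiftDensity (γ - lam) (β + lam) x.1) *
    (ENNReal.ofReal (invBetaDensity lam β x.2.1) * ENNReal.ofReal (invBetaShiftDensity γ β x.2.2))

noncomputable def stationaryKernel (γ β lam : ℝ) (x : ℝ × ℝ × ℝ) : ℝ :=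
  x.1 ^ (β + lam - 1) / (x.1 + 1) ^ (γ + β) *
    ((x.2.1 - 1) ^ (β - 1) / x.2.1 ^ (lam + β) * (x.2.2 ^ (β - 1) / (x.2.2 + 1) ^ (γ + β)))

section Stationary

variable {γ β lam : ℝ}

theorem measurable_stationaryDensity : Measurable (stationaryDensity γ β lam) := by
  unfold stationaryDensity
  fun_prop

theorem support_stationaryDensity_subset :
    Function.support (stationaryDensity γ β lam) ⊆ phiDomain := by
  intro x hx
  simp only [Function.mem_support, stationaryDensity, ne_eq, mul_eq_zero, not_or] at hx
  obtain ⟨hU, hV, hW⟩ := hx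
  refine mem_phiDomain.2 ⟨?_, ?_, ?_⟩ <;> by_contra h
  · exact hU (by rw [invBetaShiftDensity, if_neg h, ENNReal.ofReal_zero])
  · exact hV (by rw [invBetaDensity, if_neg h, ENNReal.ofReal_zero])
  · exact hW (by rw [invBetaShiftDensity, if_neg h, ENNReal.ofReal_zero])

theorem exists_stationaryDensity_eq_ofReal_mul_kernel (hβ : 0 < β) (hlam : 0 < lam)
    (hlamγ : lam < γ) : ∃ C : ℝ, ∀ x ∈ phiDomain,
      stationaryDensity γ β lam x = ENNReal.ofReal (C * stationaryKernel γ β lam x) := by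
  refine ⟨Gamma (γ + β) / (Gamma (γ - lam) * Gamma (β + lam)) *
    (Gamma (lam + β) / (Gamma lam * Gamma β)) * (Gamma (γ + β) / (Gamma γ * Gamma β)),
    fun x hx => ?_⟩
  obtain ⟨hu, hv, hw⟩ := mem_phiDomain.1 hx
  rw [stationaryDensity,
    ← ENNReal.ofReal_mul (invBetaDensity_nonneg hlam hβ _),
    ← ENNReal.ofReal_mul (invBetaShiftDensity_nonneg (by linarith) (by linarith) _),
    invBetaShiftDensity_of_pos hu, invBetaDensity_of_one_lt hv, invBetaShiftDensity_of_pos hw,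
    stationaryKernel, show γ - lam + (β + lam) = γ + β by ring]
  congr 1
  ring

theorem abs_det_phiJacobian_mul_stationaryKernel {x : ℝ × ℝ × ℝ} (hx : x ∈ phiDomain) :
    |(phiJacobian x).det| * stationaryKernel γ β lam (phi x) = stationaryKernel γ β lam x := by
  obtain ⟨u, v, w⟩ := x
  obtain ⟨hu, hv, hw⟩ := mem_phiDomain.1 hx
  dsimp only at hu hv hw
  have hv0 : 0 < v := by linarith
  have hv1 : 0 < v - 1 := by linarith
  have hphi3 : u * (v - 1) / (u + v) + 1 = v * (u + 1) / (u + v) := by field_simp; ring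
  rw [det_phiJacobian hu hv0, abs_neg, abs_of_pos (by positivity)]
  simp only [stationaryKernel, phi]
  rw [phi1_add_one hv0.ne', phi1_eq hv0.ne', phi2_sub_one hu.ne', phi2_eq hu.ne', hphi3]
  refine log_injOn_pos (mem_Ioi.2 (by positivity)) (mem_Ioi.2 (by positivity)) ?_
  simp (disch := positivity) only [log_mul, log_div, log_rpow]
  ring

theorem measurePreserving_phi (hβ : 0 < β) (hlam : 0 < lam) (hlamγ : lam < γ) :
    MeasurePreserving phi (volume.withDensity (stationaryDensity γ β lam))
      (volume.withDensity (stationaryDensity γ β lam)) := by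
  have : (volume : Measure (ℝ × ℝ × ℝ)).IsAddHaarMeasure := Measure.prod.instIsAddHaarMeasure _ _
  obtain ⟨C, hC⟩ := exists_stationaryDensity_eq_ofReal_mul_kernel hβ hlam hlamγ
  refine measurePreserving_withDensity_of_leftInvOn volume
    (ψ' := fun x => (phiJacobian x).toTripleCLM) measurableSet_phiDomain measurable_phi
    mapsTo_phi leftInvOn_phi (fun x hx => ?_) support_stationaryDensity_subset fun x hx => ?_
  · obtain ⟨hu, hv, -⟩ := mem_phiDomain.1 hx
    exact (hasFDerivAt_phi hu (by linarith)).hasFDerivWithinAt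
  · rw [Matrix.det_toTripleCLM, hC x hx, hC _ (mapsTo_phi hx),
      ← ENNReal.ofReal_mul (abs_nonneg _), ← abs_det_phiJacobian_mul_stationaryKernel hx,
      mul_left_comm]

end Stationary

/-- Detailed balance for the Inverse-Beta stationary measure: with `U, V, W` independent,
`U ∼ 1/Beta(γ-λ,β+λ) - 1`, `V ∼ 1/Beta(λ,β)`, `W ∼ 1/Beta(γ,β) - 1`, and
`(U',V')` the first two components of `φ(U,V,W)`, the joint law of `((U',V'),(U,V))` is
symmetric under exchanging `(U,V) ↔ (U',V')`. -/
theorem phiIB_detailed_balance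
    {Ω : Type*} [MeasurableSpace Ω] (P : Measure Ω) [IsProbabilityMeasure P]
    (γ β lam : ℝ) (hβ : 0 < β) (hlam : 0 < lam) (hlamγ : lam < γ)
    (U V W : Ω → ℝ) (hU : Measurable U) (hV : Measurable V) (hW : Measurable W)
    (hindep : iIndepFun ![U, V, W] P)
    (hlawU : P.map U =
      volume.withDensity fun x => ENNReal.ofReal (invBetaShiftDensity (γ - lam) (β + lam) x))
    (hlawV : P.map V =
      volume.withDensity fun x => ENNReal.ofReal (invBetaDensity lam β x))
    (hlawW : P.map W =
      volume.withDensity fun x => ENNReal.ofReal (invBetaShiftDensity γ β x)) :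
    P.map (fun ω => ((phi1 (U ω) (V ω) (W ω), phi2 (U ω) (V ω) (W ω)), (U ω, V ω)))
      = P.map (fun ω => ((U ω, V ω), (phi1 (U ω) (V ω) (W ω), phi2 (U ω) (V ω) (W ω)))) := by
  set μ := volume.withDensity (stationaryDensity γ β lam)
  have hX : Measurable fun ω => (U ω, V ω, W ω) := hU.prodMk (hV.prodMk hW)
  have hlaw : P.map (fun ω => (U ω, V ω, W ω)) = μ := by
    rw [map_prodMk_eq_prod_of_iIndepFun hU hV hW hindep, hlawU, hlawV, hlawW,
      prod_withDensity (by fun_prop) (by fun_prop), prod_withDensity (by fun_prop) (by fun_prop),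
      ← Measure.volume_eq_prod, ← Measure.volume_eq_prod]
    rfl
  have hinv : ∀ᵐ x ∂μ, phi (phi x) = x :=
    (ae_withDensity_iff measurable_stationaryDensity).2 <| .of_forall fun x hx =>
      leftInvOn_phi (support_stationaryDensity_subset hx)
  let f : ℝ × ℝ × ℝ → ℝ × ℝ := fun x => (x.1, x.2.1)
  calc _ = (P.map fun ω => (U ω, V ω, W ω)).map (fun x => (f (phi x), f x)) :=
        (Measure.map_map (by fun_prop) hX).symm
    _ = (P.map fun ω => (U ω, V ω, W ω)).map (fun x => (f x, f (phi x))) := by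
        rw [hlaw]
        exact (measurePreserving_phi hβ hlam hlamγ).map_prodMk_swap_of_ae_involutive hinv
          (by fun_prop)
    _ = _ := Measure.map_map (by fun_prop) hX
end

section
/- Define f_U(q_b) = (q_b² q' - q)/((q_b - q)(1 - q_b q')) and f_V(q_b) = -[(1-q')/(1-q_b q')]·q_b/(1-q_b) for q < q_b < 1. Then f_U(q_b) < f_V(q_b) for q_b < √q, f_U(q_b) > f_V(q_b) for q_b > √q, and f_U(√q) = f_V(√q). Moreover f_U(q_b) → -∞ as q_b → q⁺ and f_V(q_b) → -∞ as q_b → 1⁻. -/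
open Filter Set Topology

/-!
The difference `f_U - f_V` collapses to `(q_b² - q) / ((q_b - q)(1 - q_b))`, whose denominator is
positive on `(q, 1)`, so its sign is that of `q_b - √q`. Each energy is a quotient whose numerator
has a negative limit and whose denominator tends to `0⁺` at the respective end of `(q, 1)`.
-/

theorem Filter.Tendsto.div_atBot_of_neg_of_nhdsGT_zero {α 𝕜 : Type*} [Field 𝕜] [LinearOrder 𝕜]
    [IsStrictOrderedRing 𝕜] [TopologicalSpace 𝕜] [OrderTopology 𝕜] {l : Filter α} {f g : α → 𝕜}
    {C : 𝕜} (hC : C < 0) (hf : Tendsto f l (𝓝 C)) (hg : Tendsto g l (𝓝 0))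
    (hg_pos : ∀ᶠ x in l, 0 < g x) : Tendsto (fun x => f x / g x) l atBot := by
  simpa only [div_eq_mul_inv, Function.comp_def] using
    hf.neg_mul_atTop hC (tendsto_inv_nhdsGT_zero.comp (tendsto_nhdsWithin_iff.2 ⟨hg, hg_pos⟩))

namespace BernoulliGeometric

noncomputable def energyU (q q' x : ℝ) : ℝ := (x ^ 2 * q' - q) / ((x - q) * (1 - x * q'))

noncomputable def energyV (q' x : ℝ) : ℝ := -((1 - q') / (1 - x * q')) * (x / (1 - x))

variable {q q' x : ℝ}

lemma energyU_sub_energyV (hxq : x - q ≠ 0) (hx1 : 1 - x ≠ 0) (hxq' : 1 - x * q' ≠ 0) :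
    energyU q q' x - energyV q' x = (x ^ 2 - q) / ((x - q) * (1 - x)) := by
  unfold energyU energyV
  field_simp
  ring

lemma energyU_sub_energyV_of_mem_Ioo (h0q : 0 < q) (hq'1 : q' < 1) (hx : x ∈ Ioo q 1) :
    energyU q q' x - energyV q' x = (x ^ 2 - q) / ((x - q) * (1 - x)) :=
  energyU_sub_energyV (sub_pos.2 hx.1).ne' (sub_pos.2 hx.2).ne'
    (sub_pos.2 (mul_lt_one_of_nonneg_of_lt_one_left (h0q.trans hx.1).le hx.2 hq'1.le)).ne'

lemma energyU_lt_energyV (h0q : 0 < q) (hq'1 : q' < 1) (hx : x ∈ Ioo q 1) (hxs : x < √q) :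
    energyU q q' x < energyV q' x := by
  have hnum : x ^ 2 - q < 0 := sub_neg.2 ((Real.lt_sqrt (h0q.trans hx.1).le).1 hxs)
  have hden : 0 < (x - q) * (1 - x) := mul_pos (sub_pos.2 hx.1) (sub_pos.2 hx.2)
  have := energyU_sub_energyV_of_mem_Ioo h0q hq'1 hx
  linarith [div_neg_of_neg_of_pos hnum hden]

lemma energyV_lt_energyU (h0q : 0 < q) (hq'1 : q' < 1) (hx : x ∈ Ioo q 1) (hxs : √q < x) :
    energyV q' x < energyU q q' x := by
  have hnum : 0 < x ^ 2 - q := sub_pos.2 ((Real.sqrt_lt' (h0q.trans hx.1)).1 hxs)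
  have hden : 0 < (x - q) * (1 - x) := mul_pos (sub_pos.2 hx.1) (sub_pos.2 hx.2)
  have := energyU_sub_energyV_of_mem_Ioo h0q hq'1 hx
  linarith [div_pos hnum hden]

lemma sqrt_mem_Ioo (h0q : 0 < q) (hq1 : q < 1) : √q ∈ Ioo q 1 :=
  ⟨Real.lt_sqrt_self_iff.2 ⟨h0q.ne', hq1⟩, (Real.sqrt_lt' one_pos).2 (by rwa [one_pow])⟩

lemma energyU_sqrt (h0q : 0 < q) (hq1 : q < 1) (hq'1 : q' < 1) :
    energyU q q' √q = energyV q' √q := by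
  have := energyU_sub_energyV_of_mem_Ioo h0q hq'1 (sqrt_mem_Ioo h0q hq1)
  rw [Real.sq_sqrt h0q.le, sub_self, zero_div] at this
  exact sub_eq_zero.1 this

lemma tendsto_energyU_nhdsGT (h0q : 0 < q) (hq1 : q < 1) (hq'1 : q' < 1) :
    Tendsto (energyU q q') (𝓝[>] q) atBot := by
  have hqq' : q * q' < 1 := mul_lt_one_of_nonneg_of_lt_one_left h0q.le hq1 hq'1.le
  have hnum : Tendsto (fun x => x ^ 2 * q' - q) (𝓝[>] q) (𝓝 (q ^ 2 * q' - q)) :=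
    ((by fun_prop : Continuous fun x : ℝ => x ^ 2 * q' - q).tendsto q).mono_left
      nhdsWithin_le_nhds
  have hden : Tendsto (fun x => (x - q) * (1 - x * q')) (𝓝[>] q) (𝓝 0) := by
    refine (Continuous.tendsto' (by fun_prop) q 0 ?_).mono_left nhdsWithin_le_nhds
    ring
  refine hnum.div_atBot_of_neg_of_nhdsGT_zero (by nlinarith) hden ?_
  filter_upwards [Ioo_mem_nhdsGT hq1] with x hx
  exact mul_pos (sub_pos.2 hx.1)
    (sub_pos.2 (mul_lt_one_of_nonneg_of_lt_one_left (h0q.trans hx.1).le hx.2 hq'1.le))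

lemma tendsto_energyV_nhdsLT (hq'1 : q' < 1) : Tendsto (energyV q') (𝓝[<] 1) atBot := by
  have hnum : Tendsto (fun x => -((1 - q') / (1 - x * q')) * x) (𝓝[<] 1) (𝓝 (-1)) := by
    have h : ContinuousAt (fun x => -((1 - q') / (1 - x * q')) * x) 1 := by
      fun_prop (disch := simp; linarith)
    simpa [div_self (sub_ne_zero.2 hq'1.ne')] using h.tendsto.mono_left nhdsWithin_le_nhds
  have hden : Tendsto (fun x : ℝ => 1 - x) (𝓝[<] 1) (𝓝 0) :=
    (Continuous.tendsto' (by fun_prop) 1 0 (sub_self 1)).mono_left nhdsWithin_le_nhds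
  refine (hnum.div_atBot_of_neg_of_nhdsGT_zero (by norm_num) hden
    (eventually_mem_nhdsWithin.mono fun x hx => sub_pos.2 hx)).congr fun x => ?_
  simp only [energyV, mul_div_assoc]

end BernoulliGeometric

open BernoulliGeometric in
theorem BG_boundary_energies_properties_general (q q' : ℝ)
    (h0q : 0 < q) (hq1 : q < 1) (hq'1 : q' < 1) :
    (∀ qb ∈ Ioo q 1, qb < Real.sqrt q →
      (qb ^ 2 * q' - q) / ((qb - q) * (1 - qb * q'))
        < -((1 - q') / (1 - qb * q')) * (qb / (1 - qb))) ∧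
    (∀ qb ∈ Ioo q 1, Real.sqrt q < qb →
      -((1 - q') / (1 - qb * q')) * (qb / (1 - qb))
        < (qb ^ 2 * q' - q) / ((qb - q) * (1 - qb * q'))) ∧
    ((Real.sqrt q ^ 2 * q' - q) / ((Real.sqrt q - q) * (1 - Real.sqrt q * q'))
      = -((1 - q') / (1 - Real.sqrt q * q')) * (Real.sqrt q / (1 - Real.sqrt q))) ∧
    Tendsto (fun qb => (qb ^ 2 * q' - q) / ((qb - q) * (1 - qb * q')))
      (nhdsWithin q (Ioi q)) atBot ∧
    Tendsto (fun qb => -((1 - q') / (1 - qb * q')) * (qb / (1 - qb)))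
      (nhdsWithin 1 (Iio 1)) atBot :=
  ⟨fun _ hx hxs => energyU_lt_energyV h0q hq'1 hx hxs,
    fun _ hx hxs => energyV_lt_energyU h0q hq'1 hx hxs,
    energyU_sqrt h0q hq1 hq'1,
    tendsto_energyU_nhdsGT h0q hq1 hq'1,
    tendsto_energyV_nhdsLT hq'1⟩

/-- Properties of the mean boundary energies of the Bernoulli-Geometric polymer,
`f_U(q_b) = (q_b² q' - q)/((q_b - q)(1 - q_b q'))` and
`f_V(q_b) = -[(1-q')/(1-q_b q')]·q_b/(1-q_b)` on `(q,1)`: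
`f_U < f_V` for `q_b < √q`, `f_U > f_V` for `q_b > √q`, equality at `q_b = √q`,
`f_U → -∞` as `q_b → q⁺` and `f_V → -∞` as `q_b → 1⁻`. -/
theorem BG_boundary_energies_properties (q q' : ℝ)
    (h0q : 0 < q) (hq1 : q < 1) (h0q' : 0 ≤ q') (hq'1 : q' < 1) :
    (∀ qb ∈ Ioo q 1, qb < Real.sqrt q →
      (qb ^ 2 * q' - q) / ((qb - q) * (1 - qb * q'))
        < -((1 - q') / (1 - qb * q')) * (qb / (1 - qb))) ∧
    (∀ qb ∈ Ioo q 1, Real.sqrt q < qb →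
      -((1 - q') / (1 - qb * q')) * (qb / (1 - qb))
        < (qb ^ 2 * q' - q) / ((qb - q) * (1 - qb * q'))) ∧
    ((Real.sqrt q ^ 2 * q' - q) / ((Real.sqrt q - q) * (1 - Real.sqrt q * q'))
      = -((1 - q') / (1 - Real.sqrt q * q')) * (Real.sqrt q / (1 - Real.sqrt q))) ∧
    Tendsto (fun qb => (qb ^ 2 * q' - q) / ((qb - q) * (1 - qb * q')))
      (nhdsWithin q (Ioi q)) atBot ∧
    Tendsto (fun qb => -((1 - q') / (1 - qb * q')) * (qb / (1 - qb)))
      (nhdsWithin 1 (Iio 1)) atBot :=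
  BG_boundary_energies_properties_general q q' h0q hq1 hq'1
end

section
/- In the last-passage limit q' = 0, the function f(q_b) = s₁·q/(q - q_b) + s₂·q_b/(q_b - 1) on (q,1) attains its maximum value (s₁ q + 2√(s₁ q) + q)/(q-1) at q_b* = (q + √(s₁ q))/(1 + √(s₁ q)) when s₂ = 1, and this maximum lies in (q,1). -/
/-!
Write `s = √(s₁ q)`, `a = x - q` and `b = 1 - x`, so that `a + b = 1 - q` and
`f(x) = 1 - (s²/a + 1²/b)`. By Titu's form of Cauchy–Schwarz,
`s²/a + 1²/b ≥ (s + 1)²/(a + b)`, with equality exactly when `a : b = s : 1`, that is at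
`x = (q + s)/(1 + s)`; so `max f = 1 - (s + 1)²/(1 - q) = (s² + 2s + q)/(q - 1)`.
-/

open Set

theorem add_sq_div_add_le_sq_div_add_sq_div {R : Type*} [Field R] [LinearOrder R]
    [IsStrictOrderedRing R] {u v a b : R} (ha : 0 < a) (hb : 0 < b) :
    (u + v) ^ 2 / (a + b) ≤ u ^ 2 / a + v ^ 2 / b := by
  simpa [Fin.sum_univ_two] using
    Finset.sq_sum_div_le_sum_sq_div Finset.univ ![u, v] (g := ![a, b])
      (by simp [Fin.forall_fin_two, ha, hb])

theorem lpp_maximizer_mem_Ioo {q s : ℝ} (hq : q < 1) (hs : 0 < s) :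
    (q + s) / (1 + s) ∈ Ioo q 1 := by
  have h1s : 0 < 1 + s := by linarith
  constructor
  · rw [lt_div_iff₀ h1s]; nlinarith
  · rw [div_lt_one h1s]; linarith

theorem lpp_free_energy_le {q s x : ℝ} (hx : x ∈ Ioo q 1) :
    s ^ 2 / (q - x) + x / (x - 1) ≤ (s ^ 2 + 2 * s + q) / (q - 1) := by
  obtain ⟨hqx, hx1⟩ := hx
  have ha : 0 < x - q := by linarith
  have hb : 0 < 1 - x := by linarith
  have hlhs : s ^ 2 / (q - x) + x / (x - 1) = 1 - (s ^ 2 / (x - q) + 1 ^ 2 / (1 - x)) := by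
    have hqx' : q - x ≠ 0 := by linarith
    have hx1' : x - 1 ≠ 0 := by linarith
    field_simp [ha.ne', hb.ne', hqx', hx1']
    ring
  have hrhs : (s ^ 2 + 2 * s + q) / (q - 1) = 1 - (s + 1) ^ 2 / ((x - q) + (1 - x)) := by
    have hq1 : q - 1 ≠ 0 := by linarith
    field_simp [hq1, show (x - q) + (1 - x) ≠ 0 by linarith]
    ring
  rw [hlhs, hrhs]
  exact sub_le_sub_left (add_sq_div_add_le_sq_div_add_sq_div ha hb) 1

theorem lpp_free_energy_at_maximizer {q s : ℝ} (hq : q ≠ 1) (hs : 0 < s) :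
    s ^ 2 / (q - (q + s) / (1 + s)) + (q + s) / (1 + s) / ((q + s) / (1 + s) - 1)
      = (s ^ 2 + 2 * s + q) / (q - 1) := by
  have h1s : 1 + s ≠ 0 := by positivity
  have hq' : q - 1 ≠ 0 := sub_ne_zero.mpr hq
  have hden₁ : q - (q + s) / (1 + s) = (q - 1) * s / (1 + s) := by
    field_simp; ring
  have hden₂ : (q + s) / (1 + s) - 1 = (q - 1) / (1 + s) := by
    field_simp; ring
  rw [hden₁, hden₂]
  field_simp [hs.ne']
  ring

/-- In the last-passage limit `q' = 0` (and `s₂ = 1`), the function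
`f(q_b) = s₁ q/(q - q_b) + q_b/(q_b - 1)` on `(q,1)` attains its maximum at
`q_b* = (q + √(s₁ q))/(1 + √(s₁ q)) ∈ (q,1)`, with maximum value
`(s₁ q + 2√(s₁ q) + q)/(q-1)` (Johansson's formula). -/
theorem BG_LPP_limit_free_energy (q s1 : ℝ) (h0q : 0 < q) (hq1 : q < 1) (hs1 : 0 < s1) :
    (q + Real.sqrt (s1 * q)) / (1 + Real.sqrt (s1 * q)) ∈ Ioo q 1 ∧
    IsMaxOn (fun x => s1 * q / (q - x) + x / (x - 1)) (Ioo q 1)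
      ((q + Real.sqrt (s1 * q)) / (1 + Real.sqrt (s1 * q))) ∧
    s1 * q / (q - (q + Real.sqrt (s1 * q)) / (1 + Real.sqrt (s1 * q)))
      + ((q + Real.sqrt (s1 * q)) / (1 + Real.sqrt (s1 * q)))
          / ((q + Real.sqrt (s1 * q)) / (1 + Real.sqrt (s1 * q)) - 1)
      = (s1 * q + 2 * Real.sqrt (s1 * q) + q) / (q - 1) := by
  have hs : 0 < Real.sqrt (s1 * q) := by positivity
  have hsq : Real.sqrt (s1 * q) ^ 2 = s1 * q := Real.sq_sqrt (by positivity)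
  have hval := lpp_free_energy_at_maximizer hq1.ne hs
  rw [hsq] at hval
  refine ⟨lpp_maximizer_mem_Ioo hq1 hs, fun x hx => ?_, hval⟩
  have hle := lpp_free_energy_le (s := Real.sqrt (s1 * q)) hx
  rw [hsq, ← hval] at hle
  exact hle
end

section
/- The function f(φ) = [(1-2φ)·√((2qφ + q)/(1-2φ)) + q]/(q-1), defined for φ ∈ (-1/2, 1/2), equals the q' → 0 limit of the Bernoulli-Geometric free energy per unit length; equivalently, setting s₁ = 1/2 + φ, s₂ = 1/2 - φ, one has s₁·q/(q-q_b*) + s₂·q_b*/(q_b*-1) = [(1-2φ)√((2qφ+q)/(1-2φ)) + q]/(q-1) where q_b* ∈ (q,1) solves (q_b-1)²·q·s₁ = (q-q_b)²·s₂. -/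
open Set

/-- The `q' → 0` limit of the Bernoulli-Geometric free energy per unit length: with
`s₁ = 1/2 + φ`, `s₂ = 1/2 - φ`, if `q_b* ∈ (q,1)` solves the (q' = 0) saddle-point equation
`(q_b-1)²·q·s₁ = (q-q_b)²·s₂`, then
`s₁·q/(q-q_b*) + s₂·q_b*/(q_b*-1) = [(1-2φ)·√((2qφ+q)/(1-2φ)) + q]/(q-1)`. -/
theorem BG_FPP_per_unit_length (q φ : ℝ) (h0q : 0 < q) (hq1 : q < 1)
    (hφl : -(1/2) < φ) (hφu : φ < 1/2) :
    ∀ qb ∈ Ioo q 1,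
      (qb - 1) ^ 2 * q * (1/2 + φ) = (q - qb) ^ 2 * (1/2 - φ) →
      (1/2 + φ) * q / (q - qb) + (1/2 - φ) * qb / (qb - 1)
        = ((1 - 2 * φ) * Real.sqrt ((2 * q * φ + q) / (1 - 2 * φ)) + q) / (q - 1) := by
  rintro qb ⟨hqlt, hqb1⟩ hsad
  have hs2 : (0:ℝ) < 1 - 2*φ := by linarith
  have h1qb : (0:ℝ) < 1 - qb := by linarith
  have hvb : (0:ℝ) < qb - q := by linarith
  have hx : (2 * q * φ + q) / (1 - 2 * φ) = ((qb - q)/(1 - qb))^2 := by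
    rw [div_pow, div_eq_div_iff (by linarith) (by positivity)]
    linear_combination 2*hsad
  have hr : Real.sqrt ((2 * q * φ + q) / (1 - 2 * φ)) = (qb - q)/(1 - qb) := by
    rw [hx, Real.sqrt_sq (by positivity)]
  rw [hr]
  have h1 : q - qb ≠ 0 := by linarith
  have h2 : qb - 1 ≠ 0 := by linarith
  have h3 : q - 1 ≠ 0 := by linarith
  have h4 : 1 - qb ≠ 0 := by linarith
  field_simp
  ring_nf
  ring_nf at hsad
  nlinarith [hsad, sq_nonneg (qb - q)]
end

section
/- For the equilibrium boundary parameter q_b = √q, the optimal angle φ_opt = -((√q - 1)²·q')/(2(√q·q' - 1)²) satisfies the saddle-point equation (1/2 + φ_opt)·f_U'(√q) + (1/2 - φ_opt)·f_V'(√q) = 0, where f_U(q_b) = (q_b² q' - q)/((q_b-q)(1-q_b q')) and f_V(q_b) = -(1-q')q_b/((1-q_b)(1-q_b q')). Moreover φ_opt ≤ 0, with equality iff q' = 0 or q = 1. -/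
/-! Both rate functions decompose into partial fractions,
`f_U(x) = -1 - q/(x - q) + 1/(1 - x q')` and `f_V(x) = 1/(1 - x q') - 1/(1 - x)`, so
`f_U'(x) = q/(x - q)² + q'/(1 - x q')²` and `f_V'(x) = q'/(1 - x q')² - 1/(1 - x)²`.
At `x = √q` the terms `q/(√q - q)²` and `1/(1 - √q)²` coincide, and the saddle-point
equation becomes `q'/(1 - √q q')² + 2 φ/(1 - √q)² = 0`, which is solved by `φ_opt`. -/

/-- `φ_opt` as a function of `s = √q` and `q'`. -/
noncomputable def optimalAngle (s q' : ℝ) : ℝ := -((s - 1) ^ 2 * q') / (2 * (s * q' - 1) ^ 2)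

theorem hasDerivAt_rateU {q q' x : ℝ} (hxq : x ≠ q) (hxq' : x * q' ≠ 1) :
    HasDerivAt (fun x => (x ^ 2 * q' - q) / ((x - q) * (1 - x * q')))
      (q / (x - q) ^ 2 + q' / (1 - x * q') ^ 2) x := by
  have hnum := ((hasDerivAt_pow 2 x).mul_const q').sub_const q
  have hden := ((hasDerivAt_id' x).sub_const q).fun_mul
    (((hasDerivAt_id' x).mul_const q').const_sub 1)
  have h1 : x - q ≠ 0 := sub_ne_zero.mpr hxq
  have h2 : 1 - x * q' ≠ 0 := sub_ne_zero.mpr hxq'.symm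
  refine (hnum.fun_div hden (mul_ne_zero h1 h2)).congr_deriv ?_
  rw [div_add_div _ _ (pow_ne_zero 2 h1) (pow_ne_zero 2 h2),
    div_eq_div_iff (by positivity) (by positivity)]
  ring

theorem hasDerivAt_rateV {q' x : ℝ} (hx : x ≠ 1) (hxq' : x * q' ≠ 1) :
    HasDerivAt (fun x => -((1 - q') * x) / ((1 - x) * (1 - x * q')))
      (q' / (1 - x * q') ^ 2 - 1 / (1 - x) ^ 2) x := by
  have hnum := ((hasDerivAt_id' x).const_mul (1 - q')).fun_neg
  have hden := ((hasDerivAt_id' x).const_sub 1).fun_mul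
    (((hasDerivAt_id' x).mul_const q').const_sub 1)
  have h1 : 1 - x ≠ 0 := sub_ne_zero.mpr hx.symm
  have h2 : 1 - x * q' ≠ 0 := sub_ne_zero.mpr hxq'.symm
  refine (hnum.fun_div hden (mul_ne_zero h1 h2)).congr_deriv ?_
  rw [div_sub_div _ _ (pow_ne_zero 2 h2) (pow_ne_zero 2 h1),
    div_eq_div_iff (by positivity) (by positivity)]
  ring

theorem optimalAngle_saddle {s q' : ℝ} (hs0 : s ≠ 0) (hs1 : s ≠ 1) (hsq' : s * q' ≠ 1) :
    (1 / 2 + optimalAngle s q') * (s ^ 2 / (s - s ^ 2) ^ 2 + q' / (1 - s * q') ^ 2)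
      + (1 / 2 - optimalAngle s q') * (q' / (1 - s * q') ^ 2 - 1 / (1 - s) ^ 2) = 0 := by
  have hU : s ^ 2 / (s - s ^ 2) ^ 2 = 1 / (1 - s) ^ 2 := by
    field_simp
  rw [hU, optimalAngle]
  field_simp
  ring

theorem optimalAngle_nonpos (s : ℝ) {q' : ℝ} (hq' : 0 ≤ q') : optimalAngle s q' ≤ 0 :=
  div_nonpos_of_nonpos_of_nonneg (neg_nonpos.mpr (by positivity)) (by positivity)

theorem optimalAngle_eq_zero_iff {s q' : ℝ} (hsq' : s * q' ≠ 1) :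
    optimalAngle s q' = 0 ↔ q' = 0 ∨ s = 1 := by
  have h : s * q' - 1 ≠ 0 := sub_ne_zero.mpr hsq'
  simp [optimalAngle, h, sub_eq_zero, or_comm]

/-- The optimal angle of the Bernoulli-Geometric polymer,
`φ_opt = -((√q - 1)² q')/(2(√q q' - 1)²)`, satisfies the saddle-point equation at the
equilibrium boundary parameter `q_b = √q`:
`(1/2 + φ_opt)·f_U'(√q) + (1/2 - φ_opt)·f_V'(√q) = 0`, where
`f_U(q_b) = (q_b² q' - q)/((q_b-q)(1-q_b q'))` and `f_V(q_b) = -(1-q')q_b/((1-q_b)(1-q_b q'))`.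
Moreover `φ_opt ≤ 0`, with equality iff `q' = 0` or `q = 1`. -/
theorem BG_optimal_angle (q q' : ℝ)
    (h0q : 0 < q) (hq1 : q < 1) (h0q' : 0 ≤ q') (hq'1 : q' < 1) :
    (1/2 + -((Real.sqrt q - 1) ^ 2 * q') / (2 * (Real.sqrt q * q' - 1) ^ 2)) *
        deriv (fun x => (x ^ 2 * q' - q) / ((x - q) * (1 - x * q'))) (Real.sqrt q)
      + (1/2 - -((Real.sqrt q - 1) ^ 2 * q') / (2 * (Real.sqrt q * q' - 1) ^ 2)) *
        deriv (fun x => -((1 - q') * x) / ((1 - x) * (1 - x * q'))) (Real.sqrt q) = 0 ∧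
    -((Real.sqrt q - 1) ^ 2 * q') / (2 * (Real.sqrt q * q' - 1) ^ 2) ≤ 0 ∧
    (-((Real.sqrt q - 1) ^ 2 * q') / (2 * (Real.sqrt q * q' - 1) ^ 2) = 0
      ↔ q' = 0 ∨ q = 1) := by
  have hs0 : 0 < √q := Real.sqrt_pos.mpr h0q
  have hs1 : √q < 1 := (Real.sqrt_lt' one_pos).mpr (by simpa using hq1)
  have hsq : √q ^ 2 = q := Real.sq_sqrt h0q.le
  have hsq' : √q * q' ≠ 1 := by nlinarith
  have hsq_ne : √q ≠ q := by nlinarith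
  refine ⟨?_, optimalAngle_nonpos _ h0q', ?_⟩
  · rw [(hasDerivAt_rateU hsq_ne hsq').deriv, (hasDerivAt_rateV hs1.ne hsq').deriv]
    simpa only [hsq, optimalAngle] using optimalAngle_saddle hs0.ne' hs1.ne hsq'
  · exact (optimalAngle_eq_zero_iff hsq').trans (by rw [Real.sqrt_eq_one])
end
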